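/- Let G be a finite simple graph, let c be a coloring, and let c' be obtained from c by an improving swap under the variety-seeking utility U_τ. Then the number of monochromatic edges of c' is at most the number of monochromatic edges of c minus 2. Consequently the swap game under U_τ is a potential game with the number of monochromatic edges as potential. -/

import Mathlib

open SimpleGraph Finset

/-- The coloring obtained from `c` by swapping the colors (agents) at `u` and `v`. -/
def swapColoring {V : Type*} [DecidableEq V] {t : ℕ} (c : V → Fin t) (u v : V) : V → Fin t :=
  fun w => if w = u then c v else if w = v then c u else c w

/-- The binary utility `U_b`: 1 if some neighbor has a different type, 0 otherwise. -/
def Ub {V : Type*} [Fintype V] (G : SimpleGraph V) [DecidableRel G.Adj]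
    {t : ℕ} (c : V → Fin t) (v : V) : ℕ :=
  if ∃ w ∈ G.neighborFinset v, c w ≠ c v then 1 else 0

/-- The difference-seeking utility `U_#`: the number of neighbors of a different type. -/
def Usharp {V : Type*} [Fintype V] (G : SimpleGraph V) [DecidableRel G.Adj]
    {t : ℕ} (c : V → Fin t) (v : V) : ℕ :=
  ((G.neighborFinset v).filter fun w => c w ≠ c v).card

/-- `T_c(v)`: the set of types present in the neighborhood of `v`. -/
def typesIn {V : Type*} [Fintype V] (G : SimpleGraph V) [DecidableRel G.Adj]
    {t : ℕ} (c : V → Fin t) (v : V) : Finset (Fin t) :=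
  (G.neighborFinset v).image c

/-- The variety-seeking utility `U_τ`: the number of types other than `c v` in the
neighborhood of `v`. -/
def Utau {V : Type*} [Fintype V] (G : SimpleGraph V) [DecidableRel G.Adj]
    {t : ℕ} (c : V → Fin t) (v : V) : ℕ :=
  ((typesIn G c v).erase (c v)).card

/-- The swap of `u` and `v` is improving under utility `U`. -/
def ImprovingSwap {V : Type*} [DecidableEq V] {t : ℕ}
    (U : (V → Fin t) → V → ℕ) (c : V → Fin t) (u v : V) : Prop :=
  U c u < U (swapColoring c u v) v ∧ U c v < U (swapColoring c u v) u

/-- `c` is an equilibrium under the utility `U`: no improving swap exists. -/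
def Equilibrium {V : Type*} [DecidableEq V] {t : ℕ}
    (U : (V → Fin t) → V → ℕ) (c : V → Fin t) : Prop :=
  ∀ u v : V, c u ≠ c v → ¬ ImprovingSwap U c u v

/-- The number of monochromatic edges of `c`. -/
def monoCount {V : Type*} [Fintype V] [DecidableEq V] (G : SimpleGraph V) [DecidableRel G.Adj]
    {t : ℕ} (c : V → Fin t) : ℕ :=
  (G.edgeFinset.filter fun e => (e.map c).IsDiag).card

/-- The number of colorful edges of `c`. -/
def ceCount {V : Type*} [Fintype V] [DecidableEq V] (G : SimpleGraph V) [DecidableRel G.Adj]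
    {t : ℕ} (c : V → Fin t) : ℕ :=
  (G.edgeFinset.filter fun e => ¬ (e.map c).IsDiag).card

/-- The cycle graph on `ZMod n`: `i` adjacent to `i + 1` and `i - 1`. -/
def cycleZMod (n : ℕ) : SimpleGraph (ZMod n) := SimpleGraph.circulantGraph {1}

instance (n : ℕ) : DecidableRel (cycleZMod n).Adj := fun a b =>
  decidable_of_iff (a ≠ b ∧ (a - b = 1 ∨ b - a = 1)) (by simp [cycleZMod])

instance {α β : Type*} (G : SimpleGraph α) (H : SimpleGraph β)
    [DecidableRel G.Adj] [DecidableRel H.Adj] [DecidableEq α] [DecidableEq β] :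
    DecidableRel (G □ H).Adj := fun x y =>
  decidable_of_iff (G.Adj x.1 y.1 ∧ x.2 = y.2 ∨ H.Adj x.2 y.2 ∧ x.1 = y.1)
    (SimpleGraph.boxProd_adj).symm

/-!
Write `a = c u`, `b = c v` and `c'` for the swapped coloring. If `u` and `v` were adjacent,
the swap would only exchange the roles of `a` and `b` in the types seen from `u`, so
`U(c', u) = U(c, u)`, and likewise at `v`; the two improvement inequalities would then contradict
each other. Hence `u` and `v` are not adjacent and their type sets `T(u)`, `T(v)` are unchanged.
Adding `|T(u) \ {a}| < |T(v) \ {a}|` and `|T(v) \ {b}| < |T(u) \ {b}|` forces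
`a ∈ T(u) \ T(v)` and `b ∈ T(v) \ T(u)`. So after the swap no monochromatic edge touches `u` or
`v`, while before the swap each of them lay on one, and these two edges are distinct.
-/

section Swap

variable {V : Type*} [DecidableEq V] {t : ℕ} (c : V → Fin t) {u v w : V}

@[simp]
lemma swapColoring_apply_left : swapColoring c u v u = c v := by
  simp [swapColoring]

@[simp]
lemma swapColoring_apply_right : swapColoring c u v v = c u := by
  by_cases h : v = u <;> simp [swapColoring, h]

lemma swapColoring_apply_of_ne (hu : w ≠ u) (hv : w ≠ v) : swapColoring c u v w = c w := by
  simp [swapColoring, hu, hv]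

lemma swapColoring_comm : swapColoring c u v = swapColoring c v u := by
  funext w
  by_cases hu : w = u <;> by_cases hv : w = v <;> simp_all [swapColoring]

end Swap

lemma Finset.card_erase_insert_comm {α : Type*} [DecidableEq α] (S : Finset α) (a b : α) :
    ((insert b S).erase a).card = ((insert a S).erase b).card := by
  rw [← erase_insert_eq_erase, card_erase_of_mem (mem_insert_self _ _),
    ← erase_insert_eq_erase (insert a S), card_erase_of_mem (mem_insert_self _ _), insert_comm]

lemma Finset.mem_and_notMem_of_card_erase_lt {α : Type*} [DecidableEq α] {A B : Finset α}
    {a b : α} (h₁ : (A.erase a).card < (B.erase a).card)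
    (h₂ : (B.erase b).card < (A.erase b).card) : a ∈ A ∧ b ∉ A ∧ b ∈ B ∧ a ∉ B := by
  rw [card_erase_eq_ite, card_erase_eq_ite] at h₁ h₂
  split_ifs at h₁ h₂ <;> grind

section Graph

variable {V : Type*} [Fintype V] {G : SimpleGraph V} [DecidableRel G.Adj]
  {t : ℕ} {c c' : V → Fin t} {u v x : V}

lemma typesIn_congr (h : ∀ w ∈ G.neighborFinset x, c' w = c w) :
    typesIn G c' x = typesIn G c x :=
  image_congr fun w hw => h w hw

lemma typesIn_eq_insert_of_adj [DecidableEq V] (c : V → Fin t) (h : G.Adj u v) :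
    typesIn G c u = insert (c v) (((G.neighborFinset u).erase v).image c) := by
  rw [typesIn, ← image_insert, insert_erase ((mem_neighborFinset G u v).2 h)]

lemma Utau_swapColoring_of_adj [DecidableEq V] (c : V → Fin t) (h : G.Adj u v) :
    Utau G (swapColoring c u v) u = Utau G c u := by
  have hfix : ∀ w ∈ (G.neighborFinset u).erase v, swapColoring c u v w = c w := fun w hw =>
    swapColoring_apply_of_ne c
      (G.ne_of_adj ((mem_neighborFinset G u w).1 (mem_of_mem_erase hw))).symm (ne_of_mem_erase hw)
  rw [Utau, Utau, typesIn_eq_insert_of_adj _ h, typesIn_eq_insert_of_adj _ h, image_congr hfix,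
    swapColoring_apply_left, swapColoring_apply_right, card_erase_insert_comm]

lemma not_adj_of_improvingSwap_Utau [DecidableEq V] (h : ImprovingSwap (Utau G) c u v) :
    ¬ G.Adj u v := by
  intro hadj
  have hu := Utau_swapColoring_of_adj c hadj
  have hv := Utau_swapColoring_of_adj c hadj.symm
  rw [← swapColoring_comm] at hv
  exact lt_asymm (h.1.trans_eq hv) (h.2.trans_eq hu)

lemma typesIn_swapColoring_of_not_adj [DecidableEq V] (c : V → Fin t) (h : ¬ G.Adj u v) :
    typesIn G (swapColoring c u v) u = typesIn G c u := by
  refine typesIn_congr fun w hw => swapColoring_apply_of_ne c ?_ ?_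
  · exact (G.ne_of_adj ((mem_neighborFinset G u w).1 hw)).symm
  · rintro rfl
    exact h ((mem_neighborFinset G u w).1 hw)

variable (G) in
def monoEdges (c : V → Fin t) : Finset (Sym2 V) :=
  G.edgeFinset.filter fun e => (e.map c).IsDiag

lemma card_monoEdges [DecidableEq V] (c : V → Fin t) : (monoEdges G c).card = monoCount G c := rfl

lemma mk_mem_monoEdges {y : V} : s(x, y) ∈ monoEdges G c ↔ G.Adj x y ∧ c x = c y := by
  simp [monoEdges]

lemma notMem_of_mem_monoEdges {e : Sym2 V} (hx : c x ∉ typesIn G c x)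
    (he : e ∈ monoEdges G c) : x ∉ e := by
  induction e using Sym2.ind with
  | h y z =>
    rw [mk_mem_monoEdges] at he
    intro hxe
    rcases Sym2.mem_iff.1 hxe with rfl | rfl
    · exact hx (mem_image.2 ⟨z, (mem_neighborFinset G x z).2 he.1, he.2.symm⟩)
    · exact hx (mem_image.2 ⟨y, (mem_neighborFinset G x y).2 he.1.symm, he.2⟩)

lemma mem_monoEdges_of_eqOn {e : Sym2 V} (he : e ∈ monoEdges G c') (h : ∀ w ∈ e, c' w = c w) :
    e ∈ monoEdges G c := by
  induction e using Sym2.ind with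
  | h y z =>
    rw [mk_mem_monoEdges] at he ⊢
    rw [← h y (Sym2.mem_mk_left y z), ← h z (Sym2.mem_mk_right y z)]
    exact he

lemma exists_mk_mem_monoEdges (hx : c x ∈ typesIn G c x) : ∃ y, s(x, y) ∈ monoEdges G c := by
  obtain ⟨y, hy, hcy⟩ := mem_image.1 hx
  exact ⟨y, mk_mem_monoEdges.2 ⟨(mem_neighborFinset G x y).1 hy, hcy.symm⟩⟩

lemma monoCount_add_two_le [DecidableEq V] (huv : u ≠ v) (hadj : ¬ G.Adj u v)
    (hc' : ∀ w, w ≠ u → w ≠ v → c' w = c w)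
    (hu' : c' u ∉ typesIn G c' u) (hv' : c' v ∉ typesIn G c' v)
    (hu : c u ∈ typesIn G c u) (hv : c v ∈ typesIn G c v) :
    monoCount G c' + 2 ≤ monoCount G c := by
  obtain ⟨x, hx⟩ := exists_mk_mem_monoEdges hu
  obtain ⟨y, hy⟩ := exists_mk_mem_monoEdges hv
  have hvx : v ∉ s(u, x) := by
    rw [Sym2.mem_iff]
    rintro (rfl | rfl)
    · exact huv rfl
    · exact hadj (mk_mem_monoEdges.1 hx).1
  have hsub : monoEdges G c' ⊆ ((monoEdges G c).erase s(u, x)).erase s(v, y) := by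
    intro e he
    have heu := notMem_of_mem_monoEdges hu' he
    have hev := notMem_of_mem_monoEdges hv' he
    refine mem_erase.2 ⟨fun h => hev (h ▸ Sym2.mem_mk_left v y), mem_erase.2
      ⟨fun h => heu (h ▸ Sym2.mem_mk_left u x), mem_monoEdges_of_eqOn he fun w hw => ?_⟩⟩
    exact hc' w (fun h => heu (h ▸ hw)) (fun h => hev (h ▸ hw))
  have hy' : s(v, y) ∈ (monoEdges G c).erase s(u, x) :=
    mem_erase.2 ⟨fun h => hvx (h ▸ Sym2.mem_mk_left v y), hy⟩
  have := card_le_card hsub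
  have := card_erase_add_one hy'
  have := card_erase_add_one hx
  rw [← card_monoEdges, ← card_monoEdges]
  omega

end Graph

theorem stmt10_general {V : Type*} [Fintype V] [DecidableEq V] (G : SimpleGraph V) [DecidableRel G.Adj]
    {t : ℕ} (c : V → Fin t)
    (u v : V) (himp : ImprovingSwap (Utau G) c u v) :
    monoCount G (swapColoring c u v) + 2 ≤ monoCount G c := by
  have hadj := not_adj_of_improvingSwap_Utau himp
  have hTu := typesIn_swapColoring_of_not_adj c hadj
  have hTv : typesIn G (swapColoring c u v) v = typesIn G c v := by
    rw [swapColoring_comm]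
    exact typesIn_swapColoring_of_not_adj c fun h => hadj h.symm
  obtain ⟨h₁, h₂⟩ := himp
  simp only [Utau, hTu, hTv, swapColoring_apply_left, swapColoring_apply_right] at h₁ h₂
  obtain ⟨hu, hvu, hv, huv⟩ := mem_and_notMem_of_card_erase_lt h₁ h₂
  refine monoCount_add_two_le (by rintro rfl; exact huv hu) hadj
    (fun _ => swapColoring_apply_of_ne c) ?_ ?_ hu hv
  · rw [hTu, swapColoring_apply_left]
    exact hvu
  · rw [hTv, swapColoring_apply_right]
    exact huv

theorem stmt10 {V : Type*} [Fintype V] [DecidableEq V] (G : SimpleGraph V) [DecidableRel G.Adj]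
    {t : ℕ} (ht : 2 ≤ t) (c : V → Fin t)
    (u v : V) (huv : c u ≠ c v) (himp : ImprovingSwap (Utau G) c u v) :
    monoCount G (swapColoring c u v) + 2 ≤ monoCount G c :=
  stmt10_general G c u v himp
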